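/- Let J = ⟨ξ, ζ − s, ζ* − s⟩·O(U_q(2)) and D = O(U_q(2))/J with quotient map π. Then the element d_{0,1} = π(α + sγ) is group-like in the coalgebra D: Δ_D(d_{0,1}) = d_{0,1} ⊗ d_{0,1} and ε_D(d_{0,1}) = 1. -/
import Mathlib


open TensorProduct

/-- The right ideal `J` of `O(U_q(2))` generated by `ξ`, `ζ − s` and `ζ* − s`. -/
def Jideal (U : Type) [Ring U] [Algebra ℂ U] [StarRing U] (s : ℝ) (ξ ζ : U) :
    Submodule ℂ U :=
  Submodule.span ℂ
    {w : U | ∃ a : U, w = ξ * a ∨ w = (ζ - (s : ℂ) • 1) * a ∨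
      w = (star ζ - (s : ℂ) • 1) * a}

/-- the element `d_{0,1} = π(α + sγ)` is group-like in `D = O(U_q(2))/J`:
`Δ_D(d_{0,1}) = d_{0,1} ⊗ d_{0,1}` (i.e. `Δ(α + sγ) − (α + sγ) ⊗ (α + sγ)` lies in
`J ⊗ U + U ⊗ J = ker(π ⊗ π)`) and `ε_D(d_{0,1}) = ε(α + sγ) = 1`. -/
theorem stmt19 (U : Type) [Ring U] [Algebra ℂ U] [StarRing U] [StarModule ℂ U]
    (q s : ℝ) (hq : 0 < q ∧ q < 1) (hs : 0 ≤ s ∧ s ≤ 1)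
    (u α γ : U)
    (hu_central : ∀ x : U, u * x = x * u)
    (hu_unitary : u * star u = 1 ∧ star u * u = 1)
    (h1 : α * γ = (q : ℂ) • (γ * α))
    (h2 : α * star γ = (q : ℂ) • (star γ * α))
    (h3 : γ * star γ = star γ * γ)
    (h4 : star α * α + γ * star γ = 1)
    (h5 : α * star α + ((q : ℂ)^2) • (γ * star γ) = 1)
    -- coalgebra structure of `O(U_q(2))`
    (Δ : U →ₗ[ℂ] U ⊗[ℂ] U) (ε : U →ₗ[ℂ] ℂ)
    (hΔα : Δ α = α ⊗ₜ[ℂ] α - (q : ℂ) • ((star γ * star u) ⊗ₜ[ℂ] γ))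
    (hΔγ : Δ γ = γ ⊗ₜ[ℂ] α + (star α * star u) ⊗ₜ[ℂ] γ)
    (hΔu : Δ u = u ⊗ₜ[ℂ] u)
    (hεα : ε α = 1) (hεγ : ε γ = 0) (hεu : ε u = 1)
    (ξ ζ : U)
    (hξ : ξ = ((1 - (s : ℂ)^2)) • (γ * star γ) +
      (s : ℂ) • (γ * α * u + star α * star γ * star u))
    (hζ : ζ = ((1 - (s : ℂ)^2)) • (α * star γ) +
      (s : ℂ) • (α^2 * u - (q : ℂ) • ((star γ)^2 * star u))) :
    Δ (α + (s : ℂ) • γ) - (α + (s : ℂ) • γ) ⊗ₜ[ℂ] (α + (s : ℂ) • γ) ∈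
      LinearMap.range (TensorProduct.map (Jideal U s ξ ζ).subtype
        (LinearMap.id : U →ₗ[ℂ] U)) ⊔
      LinearMap.range (TensorProduct.map (LinearMap.id : U →ₗ[ℂ] U)
        (Jideal U s ξ ζ).subtype) ∧
    ε (α + (s : ℂ) • γ) = 1 := by

  subst hξ hζ
  obtain ⟨hu1, hu2⟩ := hu_unitary
  have hq0 : (q : ℂ) ≠ 0 := by exact_mod_cast ne_of_gt hq.1
  have hsu : ∀ x : U, star u * x = x * star u := by
    intro x
    calc star u * x = star u * (x * (u * star u)) := by rw [hu1, mul_one]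
      _ = star u * (u * (x * star u)) := by rw [← mul_assoc x u, ← hu_central x, mul_assoc]
      _ = (star u * u) * (x * star u) := by rw [mul_assoc]
      _ = x * star u := by rw [hu2, one_mul]
  have P1 : ∀ x : U, u * (x * star u) = x := by
    intro x
    rw [← mul_assoc, hu_central x, mul_assoc, hu1, mul_one]
  have P2 : ∀ x : U, star u * (x * star u) = x * (star u * star u) := by
    intro x
    rw [← mul_assoc, hsu x, mul_assoc]
  have h1' : γ * α = (q:ℂ)⁻¹ • (α * γ) := by
    rw [h1, smul_smul, inv_mul_cancel₀ hq0, one_smul]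
  have h2' : star γ * α = (q:ℂ)⁻¹ • (α * star γ) := by
    rw [h2, smul_smul, inv_mul_cancel₀ hq0, one_smul]
  have h1s : star γ * star α = (q:ℂ) • (star α * star γ) := by
    have := congrArg star h1
    simp only [star_mul, star_smul, Complex.star_def, Complex.conj_ofReal] at this
    exact this
  have h4' : star α * α = 1 - γ * star γ := eq_sub_of_add_eq h4
  have h5' : α * star α = 1 - ((q:ℂ)^2) • (γ * star γ) := eq_sub_of_add_eq h5
  -- word reduction lemmas
  have e2 : γ * (star γ * α) = ((q:ℂ)⁻¹*(q:ℂ)⁻¹) • (α * (γ * star γ)) := by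
    rw [h2', mul_smul_comm, ← mul_assoc γ α, h1', smul_mul_assoc, mul_assoc, smul_smul]
  have e3 : γ * (α * (u * (star γ * star u))) = ((q:ℂ)*((q:ℂ)⁻¹*(q:ℂ)⁻¹)) • (α * (γ * star γ)) := by
    rw [P1, h2, mul_smul_comm, e2, smul_smul]
  have e4 : γ * (α * (u * α)) = ((q:ℂ)⁻¹*(q:ℂ)⁻¹) • (α * (α * (γ * u))) := by
    rw [hu_central α, ← mul_assoc γ α, h1', smul_mul_assoc, mul_assoc α γ, ← mul_assoc γ α u,
      h1', smul_mul_assoc, mul_smul_comm, mul_assoc α γ u, smul_smul]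
  have e5 : star α * (star γ * (star u * (star γ * star u)))
      = star α * (star γ * (star γ * (star u * star u))) := by
    rw [P2]
  have e6 : star α * (star γ * (star u * α))
      = (q:ℂ)⁻¹ • (star γ * star u) - (q:ℂ)⁻¹ • (γ * (star γ * (star γ * star u))) := by
    rw [hsu α, ← mul_assoc (star γ) α, h2', smul_mul_assoc, mul_smul_comm,
      mul_assoc α (star γ), ← mul_assoc (star α) α, h4', sub_mul, one_mul,
      mul_assoc γ (star γ), smul_sub]
  have e7 : α * (star γ * (star α * star u))
      = (q:ℂ) • (star γ * star u) - ((q:ℂ)*(q:ℂ)^2) • (γ * (star γ * (star γ * star u))) := by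
    rw [← mul_assoc (star γ) (star α), h1s, smul_mul_assoc, mul_smul_comm,
      mul_assoc (star α) (star γ), ← mul_assoc α (star α), h5', sub_mul, one_mul,
      smul_mul_assoc, mul_assoc γ (star γ), smul_sub, smul_smul]
  have e8 : α * (star γ * γ) = α * (γ * star γ) := by rw [← h3]
  have e9 : α * (α * (u * (star α * star u))) = α - ((q:ℂ)^2) • (α * (γ * star γ)) := by
    rw [P1, h5', mul_sub, mul_one, mul_smul_comm]
  have e10 : α * (α * (u * γ)) = α * (α * (γ * u)) := by rw [hu_central γ]
  have e11 : star γ * (star γ * (star u * (star α * star u)))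
      = ((q:ℂ)*(q:ℂ)) • (star α * (star γ * (star γ * (star u * star u)))) := by
    rw [P2, ← mul_assoc (star γ) (star α), h1s, smul_mul_assoc, mul_smul_comm,
      mul_assoc (star α) (star γ), ← mul_assoc (star γ) (star α), h1s, smul_mul_assoc,
      smul_smul, mul_assoc (star α) (star γ)]
  have e12 : star γ * (star γ * (star u * γ)) = γ * (star γ * (star γ * star u)) := by
    rw [hsu γ, ← mul_assoc (star γ) γ, ← h3, mul_assoc γ (star γ), ← mul_assoc (star γ) γ,
      ← h3, mul_assoc γ (star γ)]
  -- the key right-ideal identity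
  set ξ : U := ((1 - (s : ℂ)^2)) • (γ * star γ) +
      (s : ℂ) • (γ * α * u + star α * star γ * star u) with hξ
  set ζ : U := ((1 - (s : ℂ)^2)) • (α * star γ) +
      (s : ℂ) • (α^2 * u - (q : ℂ) • ((star γ)^2 * star u)) with hζ
  have key : ξ * ((-(q:ℂ)^3) • (star γ * star u) + (-((q:ℂ)^2 * s)) • α)
      + (ζ - (s:ℂ) • 1) * ((-1 : ℂ) • (star α * star u) + (s:ℂ) • γ)
      = (s:ℂ) • (star α * star u) - (q:ℂ) • (star γ * star u) - (s:ℂ) • α - ((s:ℂ)^2) • γ := by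
    rw [hξ, hζ]
    simp only [mul_add, add_mul, mul_sub, sub_mul, smul_mul_assoc, mul_smul_comm, smul_add,
      smul_sub, smul_smul, mul_assoc, mul_one, one_mul, pow_two]
    rw [e2, e3, e4, e5, e6, e7, e8, e9, e10, e11, e12]
    simp only [smul_sub, smul_smul]
    match_scalars <;> field_simp <;> ring
  have hw : (s:ℂ) • (star α * star u) - (q:ℂ) • (star γ * star u) - (s:ℂ) • α - ((s:ℂ)^2) • γ
      ∈ Jideal U s ξ ζ := by
    rw [← key]
    refine add_mem ?_ ?_
    · exact Submodule.subset_span ⟨_, Or.inl rfl⟩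
    · exact Submodule.subset_span ⟨_, Or.inr (Or.inl rfl)⟩
  constructor
  · have hE : Δ (α + (s : ℂ) • γ) - (α + (s : ℂ) • γ) ⊗ₜ[ℂ] (α + (s : ℂ) • γ)
        = ((s:ℂ) • (star α * star u) - (q:ℂ) • (star γ * star u) - (s:ℂ) • α - ((s:ℂ)^2) • γ)
          ⊗ₜ[ℂ] γ := by
      rw [map_add, map_smul, hΔα, hΔγ]
      simp only [TensorProduct.add_tmul, TensorProduct.sub_tmul, TensorProduct.tmul_add,
        TensorProduct.tmul_sub, TensorProduct.tmul_smul, ← TensorProduct.smul_tmul']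
      module
    rw [hE]
    apply Submodule.mem_sup_left
    exact ⟨(⟨_, hw⟩ : Jideal U s ξ ζ) ⊗ₜ[ℂ] γ, by simp⟩
  · rw [map_add, map_smul, hεα, hεγ]
    simp
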